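/- Let G be a simple graph on a finite vertex set and let {u,v} be an edge of G. Then for all vertices x, y: x ∼_{G*u*v*u} y ⟺ (x ∼_G y) XOR ((x ∼_G u) ∧ (y ∼_G v)) XOR ((x ∼_G v) ∧ (y ∼_G u)), where x ∼_H y means x = y or {x,y} ∈ E(H). -/

import Mathlib

set_option linter.unusedSectionVars false

variable {V : Type*} [Fintype V] [DecidableEq V]

/-- Local complementation at a vertex `w`: complement the edges within `N_G(w)`. -/
def SimpleGraph.localComp (G : SimpleGraph V) (w : V) : SimpleGraph V where
  Adj x y := x ≠ y ∧ Xor' (G.Adj x y) (G.Adj x w ∧ G.Adj y w)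
  symm := by
    refine ⟨?_⟩
    intro x y ⟨hne, hx⟩
    refine ⟨hne.symm, ?_⟩
    have h1 := G.adj_comm x y
    unfold Xor' at hx ⊢
    unfold Xor at hx ⊢
    tauto
  loopless := by refine ⟨?_⟩; intro x ⟨h, _⟩; exact h rfl

/-- `x ∼_G y` : `x = y` or `{x,y}` is an edge of `G`. -/
def SimpleGraph.nbr (G : SimpleGraph V) (x y : V) : Prop := x = y ∨ G.Adj x y

theorem SimpleGraph.nbr_comm (G : SimpleGraph V) (x y : V) : G.nbr x y ↔ G.nbr y x :=
  or_congr eq_comm (G.adj_comm x y)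

private theorem xor_swap_right (a b c : Prop) : Xor' (Xor' a b) c ↔ Xor' (Xor' a c) b := by
  unfold Xor'; unfold Xor; tauto

/-- The pivot `G[uv]` of `G` on an edge `{u,v}`, characterized by
`x ∼_{G[uv]} y ⟺ (x ∼_G y) XOR ((x ∼_G u) ∧ (y ∼_G v)) XOR ((x ∼_G v) ∧ (y ∼_G u))`. -/
def SimpleGraph.pivot (G : SimpleGraph V) (u v : V) : SimpleGraph V where
  Adj x y := x ≠ y ∧
    Xor' (Xor' (G.nbr x y) (G.nbr x u ∧ G.nbr y v)) (G.nbr x v ∧ G.nbr y u)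
  symm := by
    refine ⟨?_⟩
    intro x y ⟨hne, hx⟩
    refine ⟨hne.symm, ?_⟩
    show Xor' (Xor' (G.nbr y x) (G.nbr y u ∧ G.nbr x v)) (G.nbr y v ∧ G.nbr x u)
    rw [G.nbr_comm y x, and_comm (a := G.nbr y u) (b := G.nbr x v),
      and_comm (a := G.nbr y v) (b := G.nbr x u)]
    exact (xor_swap_right _ _ _).mp hx
  loopless := by refine ⟨?_⟩; intro x ⟨h, _⟩; exact h rfl

/-- Determinant over GF(2) of the adjacency matrix of the subgraph of `G` induced by `S`. -/
noncomputable def gdet (G : SimpleGraph V) (S : Finset V) : ZMod 2 := by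
  classical
  exact Matrix.det (Matrix.of fun i j : S => if G.Adj i j then (1 : ZMod 2) else 0)

/-- Apply a sequence of pivots (left to right). -/
def applyPivots (G : SimpleGraph V) : List (V × V) → SimpleGraph V
  | [] => G
  | p :: φ => applyPivots (G.pivot p.1 p.2) φ

/-- A sequence of pivots is applicable when each pair is an edge of the graph
obtained by applying all preceding pivots. -/
def PivotsApplicable (G : SimpleGraph V) : List (V × V) → Prop
  | [] => True
  | p :: φ => G.Adj p.1 p.2 ∧ PivotsApplicable (G.pivot p.1 p.2) φ

/-- The support of a sequence of pivots: vertices occurring an odd number of times. -/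
def pivotSupport (φ : List (V × V)) : Finset V :=
  Finset.univ.filter fun x => Odd ((φ.flatMap fun p => [p.1, p.2]).count x)

/-- A sequence of pivots is reduced if its pivot vertices are pairwise distinct. -/
def ReducedSeq (φ : List (V × V)) : Prop := (φ.flatMap fun p => [p.1, p.2]).Nodup

/-- The number of perfect matchings of the subgraph of `G` induced by `S`:
sets of edges of `G` inside `S` such that every vertex of `S` lies in exactly one of them. -/
noncomputable def pmCount (G : SimpleGraph V) (S : Finset V) : ℕ := by
  classical
  exact (Finset.univ.filter fun P : Finset (Sym2 V) =>
    (∀ e ∈ P, e ∈ G.edgeSet ∧ ∀ v ∈ e, v ∈ S) ∧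
    ∀ v ∈ S, ∃! e, e ∈ P ∧ v ∈ e).card


/-! Local complementation at `w` leaves the neighbourhood of `w` unchanged. Hence, for an edge
`uv`, after complementing at `u` and then at `v` the neighbourhood of `u` is `N[v] \ {u}`, and the
final complementation at `u` toggles exactly the pairs inside that set. For `x, y ∉ {u, v}`, with
`e = [xy]`, `p = [xu]`, `q = [xv]`, `r = [yu]`, `s = [yv]`, the three toggles add up over GF(2) to
`e + pr + (p + q)(r + s) + qs = e + ps + qr`, which is the pivot rule; the pairs meeting `{u, v}`
are checked directly. -/

namespace SimpleGraph

variable {G : SimpleGraph V} {u v w x y : V}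

theorem localComp_adj :
    (G.localComp w).Adj x y ↔ x ≠ y ∧ Xor (G.Adj x y) (G.Adj x w ∧ G.Adj y w) :=
  Iff.rfl

theorem localComp_adj_self : (G.localComp w).Adj x w ↔ G.Adj x w := by
  by_cases hxw : x = w
  · simp [hxw]
  · simp [localComp_adj, hxw, xor_comm]

theorem localComp_adj_of_adj (huv : G.Adj u v) :
    (G.localComp u).Adj x v ↔ x ≠ v ∧ Xor (G.Adj x v) (G.Adj x u) := by
  simp [localComp_adj, huv.symm]

theorem localComp_localComp_adj_self (huv : G.Adj u v) :
    ((G.localComp u).localComp v).Adj x u ↔ x ≠ u ∧ G.nbr x v := by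
  have huv' : (G.localComp u).Adj u v := (localComp_adj_self.mpr huv.symm).symm
  rw [localComp_adj, localComp_adj_self, localComp_adj_of_adj huv]
  by_cases hxv : x = v
  · subst hxv
    simp [nbr, huv.symm, huv.ne', huv']
  · simp only [nbr, hxv, huv', ne_eq, not_false_eq_true, true_and, and_true, false_or]
    grind

theorem pivot_nbr : (G.pivot u v).nbr x y ↔
    Xor (Xor (G.nbr x y) (G.nbr x u ∧ G.nbr y v)) (G.nbr x v ∧ G.nbr y u) := by
  by_cases hxy : x = y
  · subst hxy
    grind [nbr]
  · exact (or_iff_right hxy).trans (and_iff_right hxy)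

theorem localComp_localComp_localComp_eq_pivot (huv : G.Adj u v) :
    ((G.localComp u).localComp v).localComp u = G.pivot u v := by
  ext x y
  rw [localComp_adj, localComp_localComp_adj_self huv, localComp_localComp_adj_self huv,
    localComp_adj, localComp_adj_of_adj huv, localComp_adj_of_adj huv, localComp_adj]
  simp only [pivot, nbr, Xor']
  refine and_congr_right fun hxy => ?_
  by_cases hxu : x = u <;> by_cases hxv : x = v <;> by_cases hyu : y = u <;> by_cases hyv : y = v <;>
    simp_all [huv.symm, huv.ne] <;> grind

end SimpleGraph

/-- For an edge `{u,v}` of `G` and all vertices `x, y`,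
`x ∼_{G*u*v*u} y ⟺ (x ∼_G y) XOR ((x ∼_G u) ∧ (y ∼_G v)) XOR ((x ∼_G v) ∧ (y ∼_G u))`. -/
theorem nbr_localComp_uvu (G : SimpleGraph V) (u v : V) (huv : G.Adj u v) (x y : V) :
    (((G.localComp u).localComp v).localComp u).nbr x y ↔
      Xor' (Xor' (G.nbr x y) (G.nbr x u ∧ G.nbr y v)) (G.nbr x v ∧ G.nbr y u) := by
  rw [SimpleGraph.localComp_localComp_localComp_eq_pivot huv]
  exact SimpleGraph.pivot_nbr
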